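/- arXiv:2603.15018 — 4 statements merged into one kernel-verified Lean document; each statement's English description precedes it below -/
import Mathlib

section
/- For every integer n ≥ 1, the sum over all binary strings z ∈ {0,1}^n with first bit 0 of the absolute value of Σ_{y=1}^n (-1)^{z_y} equals (⌊n/2⌋ + 1) · C(n, ⌊n/2⌋ + 1). -/
open Finset

lemma telescope (n j : ℕ) :
    ∑ k ∈ range (j+1), (n.choose k : ℤ) * (n - 2*k) = (j+1) * n.choose (j+1) := by
  induction j with
  | zero => simp
  | succ j ih =>
    rw [Finset.sum_range_succ, ih]
    rcases le_or_gt (j+1) n with h | h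
    · have key : ((j:ℤ)+1+1) * (n.choose (j+1+1) : ℤ) = (n.choose (j+1) : ℤ) * ((n:ℤ) - (j+1)) := by
        have h1 := Nat.choose_succ_right_eq n (j+1)
        have h2 : ((n - (j+1) : ℕ) : ℤ) = (n : ℤ) - (j+1) := by omega
        rw [← h2]
        linarith [(by exact_mod_cast h1 : (n.choose (j+1+1) : ℤ) * (j+1+1) = (n.choose (j+1) : ℤ) * ((n - (j+1) : ℕ) : ℤ))]
      push_cast
      linear_combination -key
    · have h1 : n.choose (j+1) = 0 := Nat.choose_eq_zero_of_lt h
      have h2 : n.choose (j+2) = 0 := Nat.choose_eq_zero_of_lt (by omega)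
      simp [h1, h2]

lemma reflect (n m : ℕ) (hm : m ≤ n) :
    ∑ k ∈ Ico (m+1) (n+1), (n.choose k : ℤ) * (2*k - n)
      = ∑ k ∈ range (n - m), (n.choose k : ℤ) * (n - 2*k) := by
  refine Finset.sum_nbij' (i := fun k => n - k) (j := fun k => n - k) ?_ ?_ ?_ ?_ ?_
  · intro k hk
    simp only [mem_Ico] at hk
    simp only [mem_range]
    omega
  · intro k hk
    simp only [mem_range] at hk
    simp only [mem_Ico]
    omega
  · intro k hk; simp only [mem_Ico] at hk; omega
  · intro k hk; simp only [mem_range] at hk; omega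
  · intro k hk
    simp only [mem_Ico] at hk
    have h1 : n.choose (n - k) = n.choose k := Nat.choose_symm (by omega)
    have h2 : ((n - k : ℕ) : ℤ) = (n : ℤ) - k := by omega
    simp only [h1, h2]
    ring

lemma absSum (n : ℕ) (hn : 1 ≤ n) :
    ∑ k ∈ range (n+1), (n.choose k : ℤ) * |(n:ℤ) - 2*k|
      = 2 * (((n/2 + 1) * n.choose (n/2 + 1) : ℕ) : ℤ) := by
  set m := n / 2 with hm
  have hmn : m ≤ n := Nat.div_le_self n 2
  have hsplit : ∑ k ∈ range (n+1), (n.choose k : ℤ) * |(n:ℤ) - 2*k|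
      = (∑ k ∈ range (m+1), (n.choose k : ℤ) * |(n:ℤ) - 2*k|)
        + ∑ k ∈ Ico (m+1) (n+1), (n.choose k : ℤ) * |(n:ℤ) - 2*k| := by
    rw [range_eq_Ico, ← Finset.sum_Ico_consecutive _ (by omega : 0 ≤ m+1) (by omega : m+1 ≤ n+1),
      ← range_eq_Ico]
  have h1 : ∑ k ∈ range (m+1), (n.choose k : ℤ) * |(n:ℤ) - 2*k|
      = ∑ k ∈ range (m+1), (n.choose k : ℤ) * ((n:ℤ) - 2*k) := by
    refine Finset.sum_congr rfl fun k hk => ?_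
    simp only [mem_range] at hk
    rw [abs_of_nonneg (by push_cast; omega)]
  have h2 : ∑ k ∈ Ico (m+1) (n+1), (n.choose k : ℤ) * |(n:ℤ) - 2*k|
      = ∑ k ∈ Ico (m+1) (n+1), (n.choose k : ℤ) * (2*(k:ℤ) - n) := by
    refine Finset.sum_congr rfl fun k hk => ?_
    simp only [mem_Ico] at hk
    rw [abs_of_nonpos (by push_cast; omega)]
    ring
  have h3 : ∑ k ∈ range (n - m), (n.choose k : ℤ) * ((n:ℤ) - 2*k)
      = ∑ k ∈ range (m+1), (n.choose k : ℤ) * ((n:ℤ) - 2*k) := by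
    rcases (by omega : n - m = m + 1 ∨ (n - m = m ∧ n = 2 * m)) with h | ⟨h, hn2⟩
    · rw [h]
    · rw [h, Finset.sum_range_succ]
      have : ((n:ℤ) - 2*m) = 0 := by push_cast; omega
      rw [this]
      ring
  rw [hsplit, h1, h2, reflect n m hmn, h3, telescope n m]
  push_cast
  ring

lemma card_fiber (n k : ℕ) :
    (univ.filter fun z : Fin n → Bool => (univ.filter fun y => z y).card = k).card
      = n.choose k := by
  have h := Finset.card_powersetCard k (univ : Finset (Fin n))
  rw [Finset.card_univ, Fintype.card_fin] at h
  rw [← h]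
  refine Finset.card_bij (fun z _ => univ.filter fun y => z y) ?_ ?_ ?_
  · intro z hz
    simp only [mem_filter, mem_univ, true_and] at hz
    simp [Finset.mem_powersetCard, hz]
  · intro z1 h1 z2 h2 he
    funext y
    have := Finset.ext_iff.mp he y
    simp only [mem_filter, mem_univ, true_and] at this
    by_cases hz : z1 y <;> simp_all
  · intro s hs
    simp only [Finset.mem_powersetCard] at hs
    refine ⟨fun y => y ∈ s, ?_, ?_⟩
    · simp [hs.2]
    · simp

/-- For every `n ≥ 1`, the sum over all binary strings `z ∈ {0,1}^n` with first bit `0`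
of `|∑_{y=1}^n (-1)^{z_y}|` equals `(⌊n/2⌋ + 1) * C(n, ⌊n/2⌋ + 1)`. -/
theorem stmt0 (n : ℕ) (hn : 1 ≤ n) :
    ∑ z ∈ Finset.univ.filter (fun z : Fin n → Bool => z ⟨0, hn⟩ = false),
      |∑ y : Fin n, (if z y then (-1 : ℝ) else 1)|
    = ((n / 2 + 1) * n.choose (n / 2 + 1) : ℕ) := by
  have key : ∀ z : Fin n → Bool, ∑ y : Fin n, (if z y then (-1:ℝ) else 1)
      = (n:ℝ) - 2 * (univ.filter fun y => z y).card := by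
    intro z
    have h : ∀ y : Fin n, (if z y then (-1:ℝ) else 1) = 1 - 2 * (if z y then (1:ℝ) else 0) := by
      intro y; by_cases h : z y <;> simp [h] <;> norm_num
    rw [Finset.sum_congr rfl (fun y _ => h y), Finset.sum_sub_distrib, Finset.sum_const,
      ← Finset.mul_sum, Finset.sum_boole]
    simp
  -- flip lemma
  have flip : (∑ z ∈ univ.filter (fun z : Fin n → Bool => z ⟨0, hn⟩ = false),
        |∑ y : Fin n, (if z y then (-1:ℝ) else 1)|)
      = ∑ z ∈ univ.filter (fun z : Fin n → Bool => ¬(z ⟨0, hn⟩ = false)),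
        |∑ y : Fin n, (if z y then (-1:ℝ) else 1)| := by
    refine Finset.sum_nbij' (i := fun z => fun y => !z y) (j := fun z => fun y => !z y)
      ?_ ?_ ?_ ?_ ?_
    · intro z hz
      simp only [mem_filter, mem_univ, true_and] at hz ⊢
      simp [hz]
    · intro z hz
      simp only [mem_filter, mem_univ, true_and] at hz ⊢
      simp only [Bool.not_eq_false] at hz
      simp [hz]
    · intro z hz; funext y; simp
    · intro z hz; funext y; simp
    · intro z hz
      have h : ∀ y : Fin n, (if (!z y) then (-1:ℝ) else 1) = -(if z y then (-1:ℝ) else 1) := by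
        intro y; by_cases h : z y <;> simp [h] <;> norm_num
      rw [Finset.sum_congr rfl (fun y _ => h y), Finset.sum_neg_distrib, abs_neg]
  -- total sum in terms of binomials
  have tot : (∑ z : Fin n → Bool, |∑ y : Fin n, (if z y then (-1:ℝ) else 1)|)
      = ∑ k ∈ range (n+1), (n.choose k : ℝ) * |(n:ℝ) - 2*k| := by
    rw [← Finset.sum_fiberwise_of_maps_to
      (g := fun z : Fin n → Bool => (univ.filter fun y => z y).card) (t := range (n+1))
      (fun z _ => by
        simp only [mem_range]
        exact Nat.lt_succ_of_le ((Finset.card_filter_le _ _).trans (by simp)))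
      (fun z => |∑ y : Fin n, (if z y then (-1:ℝ) else 1)|)]
    refine Finset.sum_congr rfl fun k hk => ?_
    have hconst : ∀ z ∈ univ.filter
        (fun z : Fin n → Bool => (univ.filter fun y => z y).card = k),
        |∑ y : Fin n, (if z y then (-1:ℝ) else 1)| = |(n:ℝ) - 2*k| := by
      intro z hz
      simp only [mem_filter, mem_univ, true_and] at hz
      rw [key z, hz]
    rw [Finset.sum_congr rfl hconst, Finset.sum_const, card_fiber]
    simp [mul_comm]
  -- split total
  have hsp := Finset.sum_filter_add_sum_filter_not univ
    (fun z : Fin n → Bool => z ⟨0, hn⟩ = false)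
    (fun z => |∑ y : Fin n, (if z y then (-1:ℝ) else 1)|)
  -- cast the integer identity
  have hcast : (∑ k ∈ range (n+1), (n.choose k : ℝ) * |(n:ℝ) - 2*k|)
      = ((∑ k ∈ range (n+1), (n.choose k : ℤ) * |(n:ℤ) - 2*k| : ℤ) : ℝ) := by
    push_cast
    rfl
  have habs := absSum n hn
  have : ((∑ k ∈ range (n+1), (n.choose k : ℤ) * |(n:ℤ) - 2*k| : ℤ) : ℝ)
      = 2 * (((n/2 + 1) * n.choose (n/2 + 1) : ℕ) : ℝ) := by
    rw [habs]; norm_cast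
  rw [flip] at hsp
  linarith [hsp, tot, hcast, this, flip]
end

section
/- For every integer n ≥ 2, n + Σ_{k=1}^{⌊n/2⌋} (C(n-1,k) + C(n-1,k-1)) · (n - 2k) = (⌊n/2⌋ + 1) · C(n, ⌊n/2⌋ + 1). -/
open Finset

lemma aux_telescope (n : ℕ) (hn : 1 ≤ n) : ∀ m : ℕ, m + 1 ≤ n →
    (n : ℤ) + ∑ k ∈ Finset.Icc 1 m, (n.choose k : ℤ) * ((n : ℤ) - 2 * k)
    = ((m + 1 : ℕ) : ℤ) * (n.choose (m + 1) : ℤ) := by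
  intro m
  induction m with
  | zero =>
      intro _
      simp [Nat.choose_one_right]
  | succ m ih =>
      intro hm
      rw [Finset.sum_Icc_succ_top (by omega : 1 ≤ m + 1), ← add_assoc,
        ih (by omega)]
      have key : ((m + 2 : ℕ) : ℤ) * (n.choose (m + 2) : ℤ)
          = (n.choose (m + 1) : ℤ) * ((n : ℤ) - (m + 1)) := by
        have h := Nat.choose_succ_right_eq n (m + 1)
        have hsub : ((n - (m + 1) : ℕ) : ℤ) = (n : ℤ) - (m + 1) := by
          push_cast [Nat.cast_sub (by omega : m + 1 ≤ n)]; ring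
        have := congrArg (fun x : ℕ => (x : ℤ)) h
        push_cast at this
        rw [hsub] at this
        push_cast
        linarith [this]
      have hkey : ((m:ℤ) + 2) * (n.choose (m + 2) : ℤ)
          = (n.choose (m + 1) : ℤ) * ((n : ℤ) - (m + 1)) := by push_cast at key ⊢; linarith
      simp only [show m + 1 + 1 = m + 2 from rfl]
      push_cast
      linear_combination -hkey

/-- For every `n ≥ 2`,
`n + Σ_{k=1}^{⌊n/2⌋} (C(n-1,k)+C(n-1,k-1))·(n-2k) = (⌊n/2⌋+1)·C(n,⌊n/2⌋+1)`. -/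
theorem stmt2 (n : ℕ) (hn : 2 ≤ n) :
    (n : ℤ) + ∑ k ∈ Finset.Icc 1 (n / 2),
        (((n - 1).choose k : ℤ) + ((n - 1).choose (k - 1) : ℤ)) * ((n : ℤ) - 2 * k)
    = ((n / 2 + 1 : ℕ) : ℤ) * (n.choose (n / 2 + 1) : ℤ) := by
  have hstep : ∀ k ∈ Finset.Icc 1 (n / 2),
      (((n - 1).choose k : ℤ) + ((n - 1).choose (k - 1) : ℤ)) * ((n : ℤ) - 2 * k)
      = (n.choose k : ℤ) * ((n : ℤ) - 2 * k) := by
    intro k hk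
    simp only [Finset.mem_Icc] at hk
    obtain ⟨k, rfl⟩ : ∃ j, k = j + 1 := ⟨k - 1, by omega⟩
    obtain ⟨m, rfl⟩ : ∃ j, n = j + 1 := ⟨n - 1, by omega⟩
    simp only [Nat.add_sub_cancel]
    rw [Nat.choose_succ_succ]
    push_cast
    ring
  rw [Finset.sum_congr rfl hstep]
  exact aux_telescope n (by omega) (n / 2) (by omega)
end

section
/- Let B_1,...,B_n be Hermitian involutions on a finite-dimensional Hilbert space, ρ a density operator, and for each binary string z of length n with z_1 = 0 define ω_z = √(Tr[(Σ_y (-1)^{z_y} B_y)² ρ]). Then Σ_z ω_z ≤ 2^{n-1}√n, with equality if and only if Tr[{B_y,B_{y'}} ρ] = 0 for all y ≠ y'. -/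
open Finset Matrix ComplexOrder

namespace Stmt10Aux

noncomputable def sg (b : Bool) : ℂ := if b then -1 else 1

lemma sg_mul_self (b : Bool) : sg b * sg b = 1 := by cases b <;> simp [sg]

lemma sg_not (b : Bool) : sg (!b) = - sg b := by cases b <;> simp [sg]

lemma star_sg (b : Bool) : star (sg b) = sg b := by cases b <;> simp [sg]

variable {n d : ℕ} {B : Fin n → Matrix (Fin d) (Fin d) ℂ} {ρ : Matrix (Fin d) (Fin d) ℂ}

lemma N_herm (hH : ∀ y, (B y).IsHermitian) (z : Fin n → Bool) :
    (∑ y, sg (z y) • B y).IsHermitian := by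
  unfold Matrix.IsHermitian
  rw [Matrix.conjTranspose_sum]
  refine Finset.sum_congr rfl fun y _ => ?_
  rw [Matrix.conjTranspose_smul, star_sg, (hH y).eq]

lemma trace_herm_mul_real {A : Matrix (Fin d) (Fin d) ℂ} (hA : A.IsHermitian)
    (hρ : ρ.IsHermitian) : ((A * ρ).trace) = (((A * ρ).trace).re : ℂ) := by
  have h : star ((A * ρ).trace) = (A * ρ).trace := by
    rw [← Matrix.trace_conjTranspose, Matrix.conjTranspose_mul, hA.eq, hρ.eq,
      Matrix.trace_mul_comm]
  exact (Complex.conj_eq_iff_re.mp h).symm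

lemma trace_psd_re_nonneg {P : Matrix (Fin d) (Fin d) ℂ} (hP : P.PosSemidef) :
    0 ≤ P.trace.re := by
  exact (Complex.nonneg_iff.mp hP.trace_nonneg).1

lemma expand (B : Fin n → Matrix (Fin d) (Fin d) ℂ) (ρ : Matrix (Fin d) (Fin d) ℂ)
    (z : Fin n → Bool) :
    ((∑ y, sg (z y) • B y) ^ 2 * ρ).trace
      = ∑ a, ∑ b, sg (z a) * sg (z b) * (B a * B b * ρ).trace := by
  rw [sq, Finset.sum_mul_sum, Finset.sum_mul, Matrix.trace_sum]
  refine Finset.sum_congr rfl fun a _ => ?_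
  rw [Finset.sum_mul, Matrix.trace_sum]
  refine Finset.sum_congr rfl fun b _ => ?_
  simp only [smul_mul_assoc, mul_smul_comm, Matrix.trace_smul, smul_eq_mul, Matrix.mul_assoc]
  ring

end Stmt10Aux

namespace Stmt10Aux

theorem main (n d : ℕ) (hn : 1 ≤ n) (B : Fin n → Matrix (Fin d) (Fin d) ℂ)
    (hH : ∀ y, (B y).IsHermitian) (hI : ∀ y, B y ^ 2 = 1)
    (ρ : Matrix (Fin d) (Fin d) ℂ) (hρ : ρ.PosSemidef) (htr : ρ.trace = 1) :
    (∑ z ∈ Finset.univ.filter (fun z : Fin n → Bool => z ⟨0, hn⟩ = false),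
        Real.sqrt ((((∑ y, sg (z y) • B y) ^ 2 * ρ).trace).re)
      ≤ 2 ^ (n - 1) * Real.sqrt n)
    ∧ ((∑ z ∈ Finset.univ.filter (fun z : Fin n → Bool => z ⟨0, hn⟩ = false),
        Real.sqrt ((((∑ y, sg (z y) • B y) ^ 2 * ρ).trace).re)
      = 2 ^ (n - 1) * Real.sqrt n)
      ↔ ∀ y y', y ≠ y' → ((B y * B y' + B y' * B y) * ρ).trace = 0) := by
  classical
  set i0 : Fin n := ⟨0, hn⟩ with hi0
  set S : Finset (Fin n → Bool) := Finset.univ.filter (fun z : Fin n → Bool => z i0 = false)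
    with hSdef
  have hT : ∀ a : Fin n, (B a * B a * ρ).trace = 1 := by
    intro a; rw [← sq, hI a, one_mul, htr]
  have hreal : ∀ z : Fin n → Bool,
      ((∑ y, sg (z y) • B y) ^ 2 * ρ).trace
        = ((((∑ y, sg (z y) • B y) ^ 2 * ρ).trace).re : ℂ) :=
    fun z => trace_herm_mul_real ((N_herm hH z).pow 2) hρ.1
  have hnonneg : ∀ z : Fin n → Bool, 0 ≤ (((∑ y, sg (z y) • B y) ^ 2 * ρ).trace).re := by
    intro z
    have hM : (∑ y, sg (z y) • B y).IsHermitian := N_herm hH z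
    have h1 : ((∑ y, sg (z y) • B y) * ρ * (∑ y, sg (z y) • B y)ᴴ).trace
        = ((∑ y, sg (z y) • B y) ^ 2 * ρ).trace := by
      rw [hM.eq, Matrix.trace_mul_comm, ← Matrix.mul_assoc, ← sq]
    rw [← h1]
    exact trace_psd_re_nonneg (hρ.mul_mul_conjTranspose_same _)
  -- orthogonality
  have horth : ∀ a b : Fin n, a ≠ b → ∑ z ∈ S, sg (z a) * sg (z b) = 0 := by
    have key : ∀ a b : Fin n, a ≠ b → b ≠ i0 → ∑ z ∈ S, sg (z a) * sg (z b) = 0 := by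
      intro a b hab hbi
      refine Finset.sum_involution (fun z _ => Function.update z b (!z b)) ?_ ?_ ?_ ?_
      · intro z hz
        rw [Function.update_of_ne hab, Function.update_self, sg_not]
        ring
      · intro z hz _ hc
        have h := congrFun hc b
        rw [Function.update_self] at h
        simp at h
      · intro z hz
        rw [hSdef, Finset.mem_filter] at hz
        rw [hSdef, Finset.mem_filter]
        refine ⟨Finset.mem_univ _, ?_⟩
        rw [Function.update_of_ne (Ne.symm hbi)]
        exact hz.2
      · intro z hz
        rw [Function.update_idem, Function.update_self, Bool.not_not, Function.update_eq_self]
    intro a b hab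
    by_cases hbi : b = i0
    · have ha : a ≠ i0 := fun h => hab (h.trans hbi.symm)
      have hz0 := key b a (Ne.symm hab) ha
      calc ∑ z ∈ S, sg (z a) * sg (z b)
          = ∑ z ∈ S, sg (z b) * sg (z a) := Finset.sum_congr rfl fun z _ => mul_comm _ _
        _ = 0 := hz0
    · exact key a b hab hbi
  -- cardinality
  have hcard : S.card = 2 ^ (n - 1) := by
    have h2 : (Finset.univ.filter (fun z : Fin n → Bool => ¬ z i0 = false)).card = S.card := by
      refine Finset.card_bij' (fun z _ => Function.update z i0 false)
        (fun z _ => Function.update z i0 true) ?_ ?_ ?_ ?_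
      · intro z hz
        rw [hSdef, Finset.mem_filter]
        exact ⟨Finset.mem_univ _, Function.update_self _ _ _⟩
      · intro z hz
        rw [Finset.mem_filter]
        refine ⟨Finset.mem_univ _, ?_⟩
        rw [Function.update_self]
        simp
      · intro z hz
        rw [Finset.mem_filter] at hz
        have hzt : z i0 = true := by simpa using hz.2
        rw [Function.update_idem, ← hzt, Function.update_eq_self]
      · intro z hz
        rw [hSdef, Finset.mem_filter] at hz
        rw [Function.update_idem, ← hz.2, Function.update_eq_self]
    have h1 : S.card + (Finset.univ.filter (fun z : Fin n → Bool => ¬ z i0 = false)).card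
        = 2 ^ n := by
      have hpc := Finset.card_filter_add_card_filter_not
        (s := (Finset.univ : Finset (Fin n → Bool))) (p := fun z => z i0 = false)
      rw [Finset.card_univ, Fintype.card_fun, Fintype.card_bool, Fintype.card_fin] at hpc
      rw [hSdef]
      exact hpc
    have h3 : 2 ^ n = 2 * 2 ^ (n - 1) := by
      calc 2 ^ n = 2 ^ (n - 1 + 1) := by rw [Nat.sub_add_cancel hn]
        _ = 2 ^ (n - 1) * 2 := pow_succ 2 (n - 1)
        _ = 2 * 2 ^ (n - 1) := Nat.mul_comm _ _
    rw [h2, ← Nat.two_mul, h3] at h1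
    exact Nat.eq_of_mul_eq_mul_left (by norm_num) h1
  -- sum of complex traces
  have hsumF : ∑ z ∈ S, ((∑ y, sg (z y) • B y) ^ 2 * ρ).trace = (2 : ℂ) ^ (n - 1) * n := by
    calc ∑ z ∈ S, ((∑ y, sg (z y) • B y) ^ 2 * ρ).trace
        = ∑ z ∈ S, ∑ a, ∑ b, sg (z a) * sg (z b) * (B a * B b * ρ).trace :=
          Finset.sum_congr rfl fun z _ => expand B ρ z
      _ = ∑ a, ∑ b, ∑ z ∈ S, sg (z a) * sg (z b) * (B a * B b * ρ).trace := by
          rw [Finset.sum_comm]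
          exact Finset.sum_congr rfl fun a _ => Finset.sum_comm
      _ = ∑ a, ∑ b, (∑ z ∈ S, sg (z a) * sg (z b)) * (B a * B b * ρ).trace := by
          simp [Finset.sum_mul]
      _ = ∑ a : Fin n, (2 : ℂ) ^ (n - 1) := by
          refine Finset.sum_congr rfl fun a _ => ?_
          rw [Finset.sum_eq_single a]
          · have hdiag : ∑ z ∈ S, sg (z a) * sg (z a) = (S.card : ℂ) := by
              rw [Finset.sum_congr rfl fun z _ => sg_mul_self (z a)]
              simp
            rw [hdiag, hcard, hT a, mul_one]
            push_cast
            ring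
          · intro b _ hba
            rw [horth a b (Ne.symm hba), zero_mul]
          · intro h
            exact absurd (Finset.mem_univ a) h
      _ = (2 : ℂ) ^ (n - 1) * n := by
          rw [Finset.sum_const, Finset.card_univ, Fintype.card_fin, nsmul_eq_mul]
          ring
  have hsumg : ∑ z ∈ S, (((∑ y, sg (z y) • B y) ^ 2 * ρ).trace).re
      = 2 ^ (n - 1) * n := by
    have h := congrArg Complex.re hsumF
    rw [Complex.re_sum] at h
    rw [h]
    have : ((2 : ℂ) ^ (n - 1) * n) = (((2 ^ (n - 1) * n : ℝ)) : ℂ) := by push_cast; ring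
    rw [this, Complex.ofReal_re]
  -- real scalar facts
  have hn1 : (1 : ℝ) ≤ (n : ℝ) := by exact_mod_cast hn
  have hnpos : (0 : ℝ) < (n : ℝ) := by linarith
  have hsqpos : 0 < Real.sqrt n := Real.sqrt_pos.mpr hnpos
  have hss : Real.sqrt n * Real.sqrt n = (n : ℝ) := Real.mul_self_sqrt (le_of_lt hnpos)
  have hpoint : ∀ x : ℝ, 0 ≤ x → Real.sqrt x ≤ (x + n) / (2 * Real.sqrt n) := by
    intro x hx
    rw [le_div_iff₀ (by positivity)]
    nlinarith [sq_nonneg (Real.sqrt x - Real.sqrt n), Real.mul_self_sqrt hx,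
      Real.sqrt_nonneg x]
  have hpoint_eq : ∀ x : ℝ, 0 ≤ x → Real.sqrt x = (x + n) / (2 * Real.sqrt n) → x = n := by
    intro x hx hEq
    have h2 : Real.sqrt x * (2 * Real.sqrt n) = x + n := by
      rw [hEq]
      field_simp
    have hxx := Real.mul_self_sqrt hx
    have h3 : (Real.sqrt x - Real.sqrt n) * (Real.sqrt x - Real.sqrt n) = 0 := by nlinarith
    have h4 : Real.sqrt x = Real.sqrt n := by
      have h5 := mul_self_eq_zero.mp h3
      have h6 := sub_eq_zero.mp h5
      linarith
    nlinarith
  have hsum_div : ∑ z ∈ S,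
      (((((∑ y, sg (z y) • B y) ^ 2 * ρ).trace).re + (n : ℝ)) / (2 * Real.sqrt n))
      = 2 ^ (n - 1) * Real.sqrt n := by
    rw [← Finset.sum_div, Finset.sum_add_distrib, hsumg, Finset.sum_const, hcard,
      nsmul_eq_mul]
    push_cast
    rw [div_eq_iff (by positivity : (2 * Real.sqrt n) ≠ 0)]
    linear_combination (-(2 * (2:ℝ) ^ (n-1))) * hss
  have hineq : ∑ z ∈ S, Real.sqrt ((((∑ y, sg (z y) • B y) ^ 2 * ρ).trace).re)
      ≤ 2 ^ (n - 1) * Real.sqrt n := by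
    calc ∑ z ∈ S, Real.sqrt ((((∑ y, sg (z y) • B y) ^ 2 * ρ).trace).re)
        ≤ ∑ z ∈ S,
            (((((∑ y, sg (z y) • B y) ^ 2 * ρ).trace).re + (n : ℝ)) / (2 * Real.sqrt n)) :=
          Finset.sum_le_sum fun z _ => hpoint _ (hnonneg z)
      _ = 2 ^ (n - 1) * Real.sqrt n := hsum_div
  have hval_of_eq :
      (∑ z ∈ S, Real.sqrt ((((∑ y, sg (z y) • B y) ^ 2 * ρ).trace).re)
        = 2 ^ (n - 1) * Real.sqrt n) →
      ∀ z ∈ S, (((∑ y, sg (z y) • B y) ^ 2 * ρ).trace).re = (n : ℝ) := by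
    intro heq z hz
    have hzero : ∀ w ∈ S, 0 ≤
        (((((∑ y, sg (w y) • B y) ^ 2 * ρ).trace).re + (n : ℝ)) / (2 * Real.sqrt n))
          - Real.sqrt ((((∑ y, sg (w y) • B y) ^ 2 * ρ).trace).re) :=
      fun w _ => sub_nonneg.mpr (hpoint _ (hnonneg w))
    have hsum0 : ∑ w ∈ S,
        ((((((∑ y, sg (w y) • B y) ^ 2 * ρ).trace).re + (n : ℝ)) / (2 * Real.sqrt n))
          - Real.sqrt ((((∑ y, sg (w y) • B y) ^ 2 * ρ).trace).re)) = 0 := by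
      rw [Finset.sum_sub_distrib, hsum_div, heq, sub_self]
    have h0 := (Finset.sum_eq_zero_iff_of_nonneg hzero).mp hsum0 z hz
    have hEq : Real.sqrt ((((∑ y, sg (z y) • B y) ^ 2 * ρ).trace).re)
        = (((((∑ y, sg (z y) • B y) ^ 2 * ρ).trace).re + (n : ℝ)) / (2 * Real.sqrt n)) := by
      linarith
    exact hpoint_eq _ (hnonneg z) hEq
  have hFn : (∀ y y', y ≠ y' → ((B y * B y' + B y' * B y) * ρ).trace = 0) →
      ∀ z : Fin n → Bool, ((∑ y, sg (z y) • B y) ^ 2 * ρ).trace = (n : ℂ) := by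
    intro hanti z
    rw [Stmt10Aux.expand B ρ z]
    have hoff : ∑ p ∈ (Finset.univ : Finset (Fin n)).offDiag,
        sg (z p.1) * sg (z p.2) * (B p.1 * B p.2 * ρ).trace = 0 := by
      refine Finset.sum_involution (fun p _ => p.swap) ?_ ?_ ?_ ?_
      · intro p hp
        obtain ⟨-, -, hne⟩ := Finset.mem_offDiag.mp hp
        have h0 : (B p.1 * B p.2 * ρ).trace + (B p.2 * B p.1 * ρ).trace = 0 := by
          rw [← Matrix.trace_add, ← Matrix.add_mul]
          exact hanti p.1 p.2 hne
        rw [Prod.fst_swap, Prod.snd_swap]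
        linear_combination (sg (z p.1) * sg (z p.2)) * h0
      · intro p hp _
        obtain ⟨-, -, hne⟩ := Finset.mem_offDiag.mp hp
        intro hc
        have h := congrArg Prod.fst hc
        rw [Prod.fst_swap] at h
        exact hne h.symm
      · intro p hp
        obtain ⟨-, -, hne⟩ := Finset.mem_offDiag.mp hp
        exact Finset.mem_offDiag.mpr ⟨Finset.mem_univ _, Finset.mem_univ _, by
          rw [Prod.fst_swap, Prod.snd_swap]
          exact hne.symm⟩
      · intro p hp
        exact Prod.swap_swap p
    rw [← Finset.sum_product', ← Finset.diag_union_offDiag,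
      Finset.sum_union (Finset.disjoint_diag_offDiag _), hoff, add_zero, Finset.sum_diag]
    have hdiag : ∀ a : Fin n, sg (z a) * sg (z a) * (B a * B a * ρ).trace = 1 := by
      intro a
      rw [sg_mul_self, hT a, one_mul]
    rw [Finset.sum_congr rfl fun a _ => hdiag a, Finset.sum_const, Finset.card_univ,
      Fintype.card_fin, nsmul_eq_mul, mul_one]
  have hanti_of_val :
      (∀ z ∈ S, (((∑ y, sg (z y) • B y) ^ 2 * ρ).trace).re = (n : ℝ)) →
      ∀ y y', y ≠ y' → ((B y * B y' + B y' * B y) * ρ).trace = 0 := by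
    intro hval
    have hallS : ∀ z ∈ S, ((∑ y, sg (z y) • B y) ^ 2 * ρ).trace = (n : ℂ) := by
      intro z hz
      rw [hreal z, hval z hz]
      norm_cast
    have hall : ∀ z : Fin n → Bool, ((∑ y, sg (z y) • B y) ^ 2 * ρ).trace = (n : ℂ) := by
      intro z
      by_cases hz : z i0 = false
      · exact hallS z (by rw [hSdef, Finset.mem_filter]; exact ⟨Finset.mem_univ _, hz⟩)
      · have hz' : (fun u => !z u) ∈ S := by
          rw [hSdef, Finset.mem_filter]
          refine ⟨Finset.mem_univ _, ?_⟩
          simp only [Bool.not_eq_false']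
          simpa using hz
        have hMneg : (∑ u, sg (z u) • B u) = -(∑ u, sg ((fun v => !z v) u) • B u) := by
          rw [← Finset.sum_neg_distrib]
          refine Finset.sum_congr rfl fun u _ => ?_
          dsimp only
          rw [sg_not (z u), neg_smul, neg_neg]
        rw [hMneg, neg_sq]
        exact hallS _ hz'
    intro y y' hyy'
    have hmem : y' ∈ Finset.univ.erase y :=
      Finset.mem_erase.mpr ⟨Ne.symm hyy', Finset.mem_univ _⟩
    have hsplit : ∀ s t : Bool,
        (∑ u, sg ((fun u => if u = y then s else if u = y' then t else false) u) • B u)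
          = sg s • B y + (sg t • B y' + ∑ u ∈ (Finset.univ.erase y).erase y', B u) := by
      intro s t
      rw [← Finset.add_sum_erase _ _ (Finset.mem_univ y),
        ← Finset.add_sum_erase _ _ hmem]
      dsimp only
      rw [if_pos rfl, if_neg (Ne.symm hyy'), if_pos rfl]
      congr 2
      refine Finset.sum_congr rfl fun u hu => ?_
      obtain ⟨hu2, hu1⟩ := Finset.mem_erase.mp hu
      obtain ⟨hu3, -⟩ := Finset.mem_erase.mp hu1
      rw [if_neg hu3, if_neg hu2]
      exact one_smul _ _
    have h4 : ∀ s t : Bool,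
        (((sg s • B y + (sg t • B y' + ∑ u ∈ (Finset.univ.erase y).erase y', B u)) ^ 2)
          * ρ).trace = (n : ℂ) := by
      intro s t
      rw [← hsplit s t]
      exact hall _
    have hff := h4 false false
    have hft := h4 false true
    have htf := h4 true false
    have htt := h4 true true
    simp only [sg, if_true, if_false, Bool.false_eq_true, one_smul, neg_smul] at hff hft htf htt
    set A := ∑ u ∈ (Finset.univ.erase y).erase y', B u with hA
    set P := B y with hP
    set Q := B y' with hQ
    have hiden : (P + (Q + A)) ^ 2 + (-P + (-Q + A)) ^ 2
        - (P + (-Q + A)) ^ 2 - (-P + (Q + A)) ^ 2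
        = (P * Q + Q * P) + (P * Q + Q * P) + ((P * Q + Q * P) + (P * Q + Q * P)) := by
      noncomm_ring
    have hiden2 := congrArg (fun X : Matrix (Fin d) (Fin d) ℂ => (X * ρ).trace) hiden
    simp only [Matrix.add_mul, Matrix.sub_mul, Matrix.trace_add, Matrix.trace_sub] at hiden2
    rw [hff, hft, htf, htt] at hiden2
    rw [Matrix.add_mul, Matrix.trace_add]
    linear_combination (-1/4 : ℂ) * hiden2
  refine ⟨hineq, ⟨fun heq => hanti_of_val (hval_of_eq heq), fun hanti => ?_⟩⟩
  have hFn' := hFn hanti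
  calc ∑ z ∈ S, Real.sqrt ((((∑ y, sg (z y) • B y) ^ 2 * ρ).trace).re)
      = ∑ z ∈ S, Real.sqrt (n : ℝ) := by
        refine Finset.sum_congr rfl fun z _ => ?_
        rw [hFn' z, Complex.natCast_re]
    _ = 2 ^ (n - 1) * Real.sqrt n := by
        rw [Finset.sum_const, hcard, nsmul_eq_mul]
        push_cast
        ring

end Stmt10Aux

/-- For Hermitian involutions `B_y` and a density matrix `ρ`, with
`ω_z = √(Tr[(Σ_y (-1)^{z_y} B_y)² ρ])` for each binary string `z` with first bit `0`,
one has `Σ_z ω_z ≤ 2^{n-1}√n`, with equality iff `Tr[{B_y,B_{y'}}ρ] = 0` for all `y ≠ y'`. -/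
theorem stmt10 (n d : ℕ) (hn : 1 ≤ n) (B : Fin n → Matrix (Fin d) (Fin d) ℂ)
    (hH : ∀ y, (B y).IsHermitian) (hI : ∀ y, B y ^ 2 = 1)
    (ρ : Matrix (Fin d) (Fin d) ℂ) (hρ : ρ.PosSemidef) (htr : ρ.trace = 1) :
    (∑ z ∈ Finset.univ.filter (fun z : Fin n → Bool => z ⟨0, hn⟩ = false),
        Real.sqrt ((((∑ y, (if z y then (-1 : ℂ) else 1) • B y) ^ 2 * ρ).trace).re)
      ≤ 2 ^ (n - 1) * Real.sqrt n)
    ∧ ((∑ z ∈ Finset.univ.filter (fun z : Fin n → Bool => z ⟨0, hn⟩ = false),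
        Real.sqrt ((((∑ y, (if z y then (-1 : ℂ) else 1) • B y) ^ 2 * ρ).trace).re)
      = 2 ^ (n - 1) * Real.sqrt n)
      ↔ ∀ y y', y ≠ y' → ((B y * B y' + B y' * B y) * ρ).trace = 0) :=
  Stmt10Aux.main n d hn B hH hI ρ hρ htr
end

section
/- Let f(Λ) = Σ_{z ∈ V} √(n + Σ_{y<y'} (-1)^{z_y+z_{y'}} Λ_{yy'}) defined on the domain where all arguments of the square roots are nonnegative, where V is the set of binary strings of length n with z_1 = 0. Then f attains its maximum value 2^{n-1}√n uniquely at Λ = 0. -/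
open Finset

namespace Stmt11Aux

noncomputable def sg (b : Bool) : ℝ := if b then -1 else 1

lemma sg_not (b : Bool) : sg (!b) = - sg b := by cases b <;> simp [sg]

lemma sg_sq (b : Bool) : sg b * sg b = 1 := by cases b <;> simp [sg]

/-- Character associated to a list of indices. -/
noncomputable def chl {n : ℕ} (l : List (Fin n)) (z : Fin n → Bool) : ℝ :=
  (l.map (fun i => sg (z i))).prod

lemma chl_nil {n : ℕ} (z : Fin n → Bool) : chl [] z = 1 := by simp [chl]

lemma chl_cons {n : ℕ} (a : Fin n) (l : List (Fin n)) (z : Fin n → Bool) :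
    chl (a :: l) z = sg (z a) * chl l z := by simp [chl]

lemma chl_append {n : ℕ} (l₁ l₂ : List (Fin n)) (z : Fin n → Bool) :
    chl (l₁ ++ l₂) z = chl l₁ z * chl l₂ z := by
  simp [chl]

lemma chl_sq {n : ℕ} (l : List (Fin n)) (z : Fin n → Bool) : chl l z * chl l z = 1 := by
  induction l with
  | nil => simp [chl]
  | cons a l ih =>
      rw [chl_cons]
      calc sg (z a) * chl l z * (sg (z a) * chl l z)
          = (sg (z a) * sg (z a)) * (chl l z * chl l z) := by ring
        _ = 1 := by rw [sg_sq, ih]; ring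

lemma chl_flip {n : ℕ} (l : List (Fin n)) (j : Fin n) (z : Fin n → Bool) :
    chl l (Function.update z j (!z j)) = (-1 : ℝ) ^ (l.count j) * chl l z := by
  induction l with
  | nil => simp [chl]
  | cons a l ih =>
      rw [chl_cons, chl_cons, ih, List.count_cons]
      by_cases h : a = j
      · subst h
        rw [Function.update_self, sg_not]
        simp [pow_succ]
        ring
      · rw [Function.update_of_ne h]
        simp only [h, if_false, beq_iff_eq, add_zero]
        ring

/-- A character with an odd count at some index `j ≠ 0` sums to zero over `V`. -/
lemma sum_chl_zero {n : ℕ} (hn : 1 ≤ n) (l : List (Fin n)) (j : Fin n)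
    (hj : j ≠ ⟨0, hn⟩) (hodd : Odd (l.count j)) :
    ∑ z ∈ Finset.univ.filter (fun z : Fin n → Bool => z ⟨0, hn⟩ = false), chl l z = 0 := by
  refine Finset.sum_involution (fun z _ => Function.update z j (!z j)) ?_ ?_ ?_ ?_
  · intro z _
    rw [chl_flip, Odd.neg_one_pow hodd]
    ring
  · intro z _ _ h
    have := congrFun h j
    simp only [Function.update_self] at this
    cases hzj : z j <;> rw [hzj] at this <;> simp at this
  · intro z hz
    simp only [Finset.mem_filter, Finset.mem_univ, true_and] at hz ⊢
    rw [Function.update_of_ne (Ne.symm hj)]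
    exact hz
  · intro z _
    simp [Function.update_idem, Function.update_self, Function.update_eq_self]

lemma snd_ne_zero {n : ℕ} (hn : 1 ≤ n) (p : {p : Fin n × Fin n // p.1 < p.2}) :
    p.1.2 ≠ ⟨0, hn⟩ := by
  intro h
  have := p.2
  rw [h] at this
  exact absurd this (by simp [Fin.lt_def])

/-- the list attached to a pair -/
def plist {n : ℕ} (p : {p : Fin n × Fin n // p.1 < p.2}) : List (Fin n) := [p.1.1, p.1.2]

lemma count_lp_snd {n : ℕ} (p : {p : Fin n × Fin n // p.1 < p.2}) :
    (plist p).count p.1.2 = 1 := by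
  have h : p.1.1 ≠ p.1.2 := ne_of_lt p.2
  simp [plist, List.count_cons, h]

/-- key: for distinct pairs there is an index `j ≠ 0` with odd count in the combined list. -/
lemma exists_odd {n : ℕ} (hn : 1 ≤ n) (p q : {p : Fin n × Fin n // p.1 < p.2}) (hpq : p ≠ q) :
    ∃ j : Fin n, j ≠ ⟨0, hn⟩ ∧ Odd ((plist p ++ plist q).count j) := by
  obtain ⟨⟨a, b⟩, hab⟩ := p
  obtain ⟨⟨c, d⟩, hcd⟩ := q
  simp only at hab hcd
  have hne : (a, b) ≠ (c, d) := by
    intro h; exact hpq (Subtype.ext h)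
  have hcount : ∀ j : Fin n, ((plist ⟨(a,b), hab⟩ ++ plist ⟨(c,d), hcd⟩).count j)
      = ((if a = j then 1 else 0) + (if b = j then 1 else 0))
        + ((if c = j then 1 else 0) + (if d = j then 1 else 0)) := by
    intro j
    simp [plist, List.count_cons, List.count_append]
    split_ifs <;> omega
  have hzero : ∀ x y : Fin n, x < y → y ≠ ⟨0, hn⟩ := by
    intro x y hxy h
    rw [h] at hxy
    exact absurd hxy (by simp [Fin.lt_def])
  by_cases hbd : b = d
  · -- then a ≠ c; take the larger of a, c
    have hac : a ≠ c := by
      intro h; exact hne (by rw [h, hbd])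
    rcases lt_or_gt_of_ne hac with h | h
    · refine ⟨c, hzero a c h, ?_⟩
      rw [hcount]
      have h1 : a ≠ c := hac
      have h2 : b ≠ c := by intro hh; rw [hbd] at hh; exact absurd hh (ne_of_gt hcd)
      have h3 : d ≠ c := ne_of_gt hcd
      simp [h1, h2, h3]
    · refine ⟨a, hzero c a h, ?_⟩
      rw [hcount]
      have h1 : b ≠ a := ne_of_gt hab
      have h2 : c ≠ a := Ne.symm hac
      have h3 : d ≠ a := by
        intro hh; rw [← hbd] at hh; exact h1 hh
      simp [h1, h2, h3]
  · -- b ≠ d; take the larger of b, d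
    rcases lt_or_gt_of_ne hbd with h | h
    · refine ⟨d, hzero c d hcd, ?_⟩
      rw [hcount]
      have h1 : a ≠ d := ne_of_lt (lt_trans hab h)
      have h2 : b ≠ d := hbd
      have h3 : c ≠ d := ne_of_lt hcd
      simp [h1, h2, h3]
    · refine ⟨b, hzero a b hab, ?_⟩
      rw [hcount]
      have h1 : a ≠ b := ne_of_lt hab
      have h2 : c ≠ b := ne_of_lt (lt_trans hcd h)
      have h3 : d ≠ b := ne_of_lt h
      simp [h1, h2, h3]

/-- cardinality of `V` -/
lemma two_pow_pred (n : ℕ) (hn : 1 ≤ n) : 2 ^ n = 2 * 2 ^ (n - 1) := by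
  obtain ⟨m, rfl⟩ : ∃ m, n = m + 1 := ⟨n - 1, by omega⟩
  rw [pow_succ, mul_comm]
  simp

lemma card_V {n : ℕ} (hn : 1 ≤ n) :
    (Finset.univ.filter (fun z : Fin n → Bool => z ⟨0, hn⟩ = false)).card = 2 ^ (n - 1) := by
  have h1 : (Finset.univ.filter (fun z : Fin n → Bool => z ⟨0, hn⟩ = false)).card
      = (Finset.univ.filter (fun z : Fin n → Bool => ¬ (z ⟨0, hn⟩ = false))).card := by
    refine Finset.card_nbij' (fun z => Function.update z ⟨0, hn⟩ (!z ⟨0, hn⟩))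
      (fun z => Function.update z ⟨0, hn⟩ (!z ⟨0, hn⟩)) ?_ ?_ ?_ ?_
    · intro z hz
      simp only [Finset.mem_filter, Finset.mem_univ, true_and] at hz ⊢
      simpa [Function.update_self] using hz
    · intro z hz
      simp only [Finset.mem_filter, Finset.mem_univ, true_and] at hz ⊢
      simp only [Bool.not_eq_false] at hz
      simpa [Function.update_self] using hz
    · intro z _
      simp [Function.update_idem, Function.update_self, Function.update_eq_self]
    · intro z _
      simp [Function.update_idem, Function.update_self, Function.update_eq_self]
  have h3 : (Finset.univ : Finset (Fin n → Bool)).card = 2 ^ n := by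
    simp [Finset.card_univ]
  have h2 : (Finset.univ.filter (fun z : Fin n → Bool => z ⟨0, hn⟩ = false)).card
      + (Finset.univ.filter (fun z : Fin n → Bool => ¬ (z ⟨0, hn⟩ = false))).card = 2 ^ n := by
    rw [← h3]
    exact Finset.card_filter_add_card_filter_not _
  rw [← h1] at h2
  have h4 := two_pow_pred n hn
  clear h1 h3
  generalize (Finset.univ.filter (fun z : Fin n → Bool => z ⟨0, hn⟩ = false)).card = c at h2 ⊢
  omega

/-- tangent line bound for sqrt -/
lemma tangent {N t : ℝ} (hN : 1 ≤ N) (ht : 0 ≤ N + t) :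
    Real.sqrt (N + t) ≤ Real.sqrt N + t / (2 * Real.sqrt N) ∧
    (Real.sqrt (N + t) = Real.sqrt N + t / (2 * Real.sqrt N) → t = 0) := by
  set s := Real.sqrt N with hs
  have hspos : 0 < s := Real.sqrt_pos.2 (by linarith)
  have hssq : s ^ 2 = N := Real.sq_sqrt (by linarith)
  set u := t / (2 * s) with hu
  have htu : t = 2 * s * u := by
    rw [hu]; field_simp
  have hexp : (s + u) ^ 2 = N + t + u ^ 2 := by
    rw [htu]; nlinarith [hssq]
  have hrhs : 0 ≤ s + u := by nlinarith [sq_nonneg (s - u)]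
  constructor
  · have h1 : N + t ≤ (s + u) ^ 2 := by nlinarith [sq_nonneg u]
    calc Real.sqrt (N + t) ≤ Real.sqrt ((s + u) ^ 2) := Real.sqrt_le_sqrt h1
      _ = s + u := Real.sqrt_sq hrhs
  · intro heq
    have h2 : N + t = (s + u) ^ 2 := by
      rw [← heq, Real.sq_sqrt ht]
    have hu0 : u = 0 := by nlinarith
    rw [htu, hu0]; ring

end Stmt11Aux

open Stmt11Aux in
/-- The function `f(Λ) = Σ_{z ∈ V} √(n + Σ_{y<y'} (-1)^{z_y+z_{y'}} Λ_{yy'})`,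
defined on the domain where all square-root arguments are nonnegative, attains its
maximum value `2^{n-1}√n` uniquely at `Λ = 0`. -/
theorem stmt11 (n : ℕ) (hn : 1 ≤ n)
    (Λ : {p : Fin n × Fin n // p.1 < p.2} → ℝ)
    (hdom : ∀ z ∈ Finset.univ.filter (fun z : Fin n → Bool => z ⟨0, hn⟩ = false),
      0 ≤ (n : ℝ) + ∑ p : {p : Fin n × Fin n // p.1 < p.2},
        ((if z p.1.1 then (-1 : ℝ) else 1) * (if z p.1.2 then (-1 : ℝ) else 1)) * Λ p) :
    (∑ z ∈ Finset.univ.filter (fun z : Fin n → Bool => z ⟨0, hn⟩ = false),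
        Real.sqrt ((n : ℝ) + ∑ p : {p : Fin n × Fin n // p.1 < p.2},
          ((if z p.1.1 then (-1 : ℝ) else 1) * (if z p.1.2 then (-1 : ℝ) else 1)) * Λ p)
      ≤ 2 ^ (n - 1) * Real.sqrt n)
    ∧ ((∑ z ∈ Finset.univ.filter (fun z : Fin n → Bool => z ⟨0, hn⟩ = false),
        Real.sqrt ((n : ℝ) + ∑ p : {p : Fin n × Fin n // p.1 < p.2},
          ((if z p.1.1 then (-1 : ℝ) else 1) * (if z p.1.2 then (-1 : ℝ) else 1)) * Λ p)
      = 2 ^ (n - 1) * Real.sqrt n) ↔ Λ = 0) := by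
  classical
  set V := Finset.univ.filter (fun z : Fin n → Bool => z ⟨0, hn⟩ = false) with hV
  -- rewrite the coefficient as a character
  have hcoef : ∀ (p : {p : Fin n × Fin n // p.1 < p.2}) (z : Fin n → Bool),
      ((if z p.1.1 then (-1 : ℝ) else 1) * (if z p.1.2 then (-1 : ℝ) else 1)) = chl (plist p) z := by
    intro p z
    simp only [plist, chl, List.map_cons, List.map_nil, List.prod_cons, List.prod_nil, sg,
      mul_one]
  set S : (Fin n → Bool) → ℝ :=
    fun z => ∑ p : {p : Fin n × Fin n // p.1 < p.2},
      ((if z p.1.1 then (-1 : ℝ) else 1) * (if z p.1.2 then (-1 : ℝ) else 1)) * Λ p with hS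
  have hN1 : (1 : ℝ) ≤ (n : ℝ) := by exact_mod_cast hn
  -- single characters sum to zero over V
  have hchar : ∀ p : {p : Fin n × Fin n // p.1 < p.2}, ∑ z ∈ V, chl (plist p) z = 0 := by
    intro p
    exact sum_chl_zero hn (plist p) p.1.2 (snd_ne_zero hn p) (by rw [count_lp_snd]; exact odd_one)
  -- sum of S over V is zero
  have hsum0 : ∑ z ∈ V, S z = 0 := by
    rw [hS]
    rw [Finset.sum_comm]
    refine Finset.sum_eq_zero ?_
    intro p _
    have : ∑ z ∈ V, ((if z p.1.1 then (-1 : ℝ) else 1) * (if z p.1.2 then (-1 : ℝ) else 1)) * Λ p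
        = (∑ z ∈ V, chl (plist p) z) * Λ p := by
      rw [Finset.sum_mul]
      refine Finset.sum_congr rfl fun z _ => by rw [hcoef]
    rw [this, hchar, zero_mul]
  have hcard : V.card = 2 ^ (n - 1) := card_V hn
  -- the tangent bound sum
  have hbound : ∑ z ∈ V, (Real.sqrt n + S z / (2 * Real.sqrt n)) = 2 ^ (n - 1) * Real.sqrt n := by
    rw [Finset.sum_add_distrib, ← Finset.sum_div, hsum0, Finset.sum_const, hcard]
    simp [nsmul_eq_mul]
  have hterm : ∀ z ∈ V, Real.sqrt ((n : ℝ) + S z) ≤ Real.sqrt n + S z / (2 * Real.sqrt n) :=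
    fun z hz => (tangent hN1 (hdom z hz)).1
  have hineq : ∑ z ∈ V, Real.sqrt ((n : ℝ) + S z) ≤ 2 ^ (n - 1) * Real.sqrt n := by
    rw [← hbound]
    exact Finset.sum_le_sum hterm
  refine ⟨hineq, ?_, ?_⟩
  · -- equality implies Λ = 0
    intro heq
    have hall : ∀ z ∈ V, Real.sqrt ((n : ℝ) + S z) = Real.sqrt n + S z / (2 * Real.sqrt n) := by
      rw [← Finset.sum_eq_sum_iff_of_le hterm]
      rw [heq, hbound]
    have hSzero : ∀ z ∈ V, S z = 0 := fun z hz => (tangent hN1 (hdom z hz)).2 (hall z hz)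
    funext p
    -- orthogonality extraction
    have hmain : ∑ z ∈ V, chl (plist p) z * S z = (V.card : ℝ) * Λ p := by
      have h1 : ∀ z, chl (plist p) z * S z
          = ∑ q : {p : Fin n × Fin n // p.1 < p.2}, (chl (plist p) z * chl (plist q) z) * Λ q := by
        intro z
        rw [hS, Finset.mul_sum]
        refine Finset.sum_congr rfl fun q _ => by rw [hcoef]; ring
      calc ∑ z ∈ V, chl (plist p) z * S z
          = ∑ q : {p : Fin n × Fin n // p.1 < p.2}, (∑ z ∈ V, chl (plist p) z * chl (plist q) z) * Λ q := by
            simp_rw [h1]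
            rw [Finset.sum_comm]
            refine Finset.sum_congr rfl fun q _ => by rw [Finset.sum_mul]
        _ = (V.card : ℝ) * Λ p := by
            rw [Finset.sum_eq_single p]
            · have : ∀ z ∈ V, chl (plist p) z * chl (plist p) z = 1 := fun z _ => chl_sq _ _
              rw [Finset.sum_congr rfl this, Finset.sum_const, nsmul_eq_mul, mul_one]
            · intro q _ hq
              obtain ⟨j, hj, hodd⟩ := exists_odd hn p q (Ne.symm hq)
              have : ∑ z ∈ V, chl (plist p) z * chl (plist q) z = ∑ z ∈ V, chl (plist p ++ plist q) z := by
                refine Finset.sum_congr rfl fun z _ => (chl_append _ _ _).symm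
              rw [this, sum_chl_zero hn _ j hj hodd, zero_mul]
            · intro h
              exact absurd (Finset.mem_univ p) h
    have hzero : ∑ z ∈ V, chl (plist p) z * S z = 0 :=
      Finset.sum_eq_zero fun z hz => by rw [hSzero z hz, mul_zero]
    rw [hzero] at hmain
    have hcpos : (0 : ℝ) < (V.card : ℝ) := by
      rw [hcard]; positivity
    have : Λ p = 0 := by
      by_contra h
      exact absurd hmain.symm (mul_ne_zero (ne_of_gt hcpos) h)
    simpa using this
  · -- Λ = 0 implies equality
    intro h
    subst h
    have : ∀ z ∈ V, Real.sqrt ((n : ℝ) + S z) = Real.sqrt n := by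
      intro z _
      have : S z = 0 := by simp [hS]
      rw [this, add_zero]
    rw [Finset.sum_congr rfl this, Finset.sum_const, hcard, nsmul_eq_mul]
    push_cast
    ring
end
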